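/- arXiv:2604.13086 — 5 statements merged into one kernel-verified Lean document; each statement's English description precedes it below -/
import Mathlib

section
/- Let (x_n) be a complex-valued sequence, r ∈ (0,1), L ∈ ℂ, and let T be the right-shift operator defined by (Tx)_0 = 0 and (Tx)_{n+1} = x_n. If lim_{N→∞} E_{n≤N}^{Bin(r)}(x_n) = L, then lim_{N→∞} E_{n≤N}^{Bin(r)}((Tx)_n) = L. -/
open Finset Filter

/-- The `N`-th `r`-binomial average of a complex sequence. -/
noncomputable def binAvg (r : ℝ) (N : ℕ) (x : ℕ → ℂ) : ℂ :=
  ∑ n ∈ Finset.range (N + 1), (N.choose n : ℂ) * (r : ℂ) ^ n * ((1 : ℂ) - r) ^ (N - n) * x n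

/-- The right-shift operator on sequences. -/
def shiftOp (x : ℕ → ℂ) : ℕ → ℂ := fun n => if n = 0 then 0 else x (n - 1)

lemma binAvg_shift_rec (r : ℝ) (x : ℕ → ℂ) (N : ℕ) :
    binAvg r (N + 1) (shiftOp x)
      = ((1 : ℂ) - r) * binAvg r N (shiftOp x) + (r : ℂ) * binAvg r N x := by
  have hB : ((1 : ℂ) - r) * binAvg r N (shiftOp x)
      = ∑ m ∈ Finset.range (N + 1),
          (N.choose (m+1) : ℂ) * (r : ℂ) ^ (m+1) * ((1:ℂ) - r) ^ (N - m) * x m := by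
    rw [binAvg, Finset.mul_sum, Finset.sum_range_succ' _ N, Finset.sum_range_succ]
    have h0 : shiftOp x 0 = 0 := rfl
    rw [h0]
    have hN : (N.choose (N+1) : ℂ) = 0 := by
      rw [Nat.choose_eq_zero_of_lt (by omega)]; norm_num
    rw [hN]
    simp only [mul_zero, zero_mul, add_zero]
    apply Finset.sum_congr rfl
    intro m hm
    simp only [Finset.mem_range] at hm
    have : shiftOp x (m + 1) = x m := rfl
    rw [this]
    have hexp : N - (m + 1) + 1 = N - m := by omega
    rw [show ((1:ℂ) - r) * ((N.choose (m+1) : ℂ) * (r:ℂ) ^ (m+1) * ((1:ℂ)-r) ^ (N-(m+1)) * x m)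
        = (N.choose (m+1) : ℂ) * (r:ℂ) ^ (m+1) * ((1:ℂ)-r) ^ (N-(m+1)+1) * x m by ring, hexp]
  rw [hB, binAvg, Finset.sum_range_succ' _ (N + 1)]
  have h0 : shiftOp x 0 = 0 := rfl
  rw [h0, mul_zero, add_zero, binAvg, Finset.mul_sum, ← Finset.sum_add_distrib]
  apply Finset.sum_congr rfl
  intro m hm
  simp only [Finset.mem_range] at hm
  have : shiftOp x (m + 1) = x m := rfl
  rw [this]
  have hexp : N + 1 - (m + 1) = N - m := by omega
  rw [hexp, Nat.choose_succ_succ]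
  push_cast
  ring

lemma tendsto_of_rec (c : ℝ) (hc0 : 0 ≤ c) (hc1 : c < 1) (d δ : ℕ → ℂ)
    (hrec : ∀ N, d (N + 1) = (c : ℂ) * d N + δ N)
    (hδ : Tendsto δ atTop (nhds 0)) : Tendsto d atTop (nhds 0) := by
  rw [NormedAddCommGroup.tendsto_nhds_zero] at hδ ⊢
  intro ε hε
  have hc1' : 0 < 1 - c := by linarith
  obtain ⟨M, hM⟩ := (hδ (ε * (1 - c) / 2) (by positivity)).exists_forall_of_atTop
  have key : ∀ j, ‖d (M + j)‖ ≤ c ^ j * ‖d M‖ + ε / 2 := by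
    intro j
    induction j with
    | zero => simp; linarith
    | succ j ih =>
        have : d (M + j + 1) = (c : ℂ) * d (M + j) + δ (M + j) := hrec _
        calc ‖d (M + (j + 1))‖ = ‖(c : ℂ) * d (M + j) + δ (M + j)‖ := by
              rw [show M + (j + 1) = M + j + 1 by ring, this]
          _ ≤ ‖(c : ℂ) * d (M + j)‖ + ‖δ (M + j)‖ := norm_add_le _ _
          _ ≤ c * ‖d (M + j)‖ + ε * (1 - c) / 2 := by
              have h1 : ‖(c : ℂ) * d (M + j)‖ = c * ‖d (M + j)‖ := by
                rw [norm_mul, Complex.norm_real, Real.norm_of_nonneg hc0]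
              rw [h1]
              have := (hM (M + j) (by omega)).le
              linarith
          _ ≤ c * (c ^ j * ‖d M‖ + ε / 2) + ε * (1 - c) / 2 := by
              nlinarith [norm_nonneg (d (M + j))]
          _ ≤ c ^ (j + 1) * ‖d M‖ + ε / 2 := by ring_nf; nlinarith
  have hpow : Tendsto (fun j => c ^ j * ‖d M‖) atTop (nhds 0) := by
    simpa using (tendsto_pow_atTop_nhds_zero_of_lt_one hc0 hc1).mul_const ‖d M‖
  obtain ⟨J, hJ⟩ := (hpow.eventually (gt_mem_nhds (by linarith : (0:ℝ) < ε / 2))).exists_forall_of_atTop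
  rw [eventually_atTop]
  refine ⟨M + J, fun N hN => ?_⟩
  obtain ⟨j, rfl⟩ : ∃ j, N = M + j := ⟨N - M, by omega⟩
  have hj : J ≤ j := by omega
  have h1 := key j
  have h2 : c ^ j * ‖d M‖ ≤ c ^ J * ‖d M‖ :=
    mul_le_mul_of_nonneg_right (pow_le_pow_of_le_one hc0 hc1.le hj) (norm_nonneg _)
  have h3 := hJ J le_rfl
  calc ‖d (M + j)‖ ≤ c ^ j * ‖d M‖ + ε / 2 := h1
    _ ≤ c ^ J * ‖d M‖ + ε / 2 := by linarith
    _ < ε := by linarith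

theorem stmt_4 (r : ℝ) (hr : r ∈ Set.Ioo (0:ℝ) 1) (x : ℕ → ℂ) (L : ℂ)
    (h : Tendsto (fun N => binAvg r N x) atTop (nhds L)) :
    Tendsto (fun N => binAvg r N (shiftOp x)) atTop (nhds L) := by
  obtain ⟨hr0, hr1⟩ := hr
  set d : ℕ → ℂ := fun N => binAvg r N (shiftOp x) - L with hd
  set δ : ℕ → ℂ := fun N => (r : ℂ) * (binAvg r N x - L) with hδdef
  have hrec : ∀ N, d (N + 1) = ((1 - r : ℝ) : ℂ) * d N + δ N := by
    intro N
    simp only [hd, hδdef]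
    rw [binAvg_shift_rec]
    push_cast
    ring
  have hδ : Tendsto δ atTop (nhds 0) := by
    have := (h.sub_const L).const_mul (r : ℂ)
    simpa using this
  have hd0 : Tendsto d atTop (nhds 0) :=
    tendsto_of_rec (1 - r) (by linarith) (by linarith) d δ hrec hδ
  have := hd0.add_const L
  simpa [hd] using this
end

section
/- Let (x_n) be a complex-valued sequence, r ∈ (0,1), and let T be the right-shift operator. Then sup_{N∈ℕ} |E_{n≤N}^{Bin(r)}((Tx)_n)| ≤ sup_{N∈ℕ} |E_{n≤N}^{Bin(r)}(x_n)|. -/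
open Finset Filter
open scoped ENNReal

lemma binAvg_succ (r : ℝ) (N : ℕ) (y : ℕ → ℂ) :
    binAvg r (N+1) y
      = ((1:ℂ) - r) * binAvg r N y + (r:ℂ) * binAvg r N (fun n => y (n+1)) := by
  unfold binAvg
  rw [Finset.sum_range_succ'
        (fun n => (((N+1).choose n : ℂ)) * (r:ℂ)^n * ((1:ℂ)-r)^(N+1-n) * y n) (N+1),
      Finset.sum_range_succ'
        (fun n => ((N.choose n : ℂ)) * (r:ℂ)^n * ((1:ℂ)-r)^(N-n) * y n) N]
  simp only [Nat.succ_sub_succ, Nat.choose_succ_succ, Nat.choose_zero_right,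
    Nat.cast_add, Nat.cast_one, pow_zero, Nat.sub_zero, mul_one, one_mul]
  have hcongr : ∀ i ∈ Finset.range (N+1),
      ((N.choose i : ℂ) + (N.choose (i+1) : ℂ)) * (r:ℂ)^(i+1) * ((1:ℂ)-r)^(N-i) * y (i+1)
      = (r:ℂ) * ((N.choose i : ℂ) * (r:ℂ)^i * ((1:ℂ)-r)^(N-i) * y (i+1))
        + ((1:ℂ)-r) * ((N.choose (i+1) : ℂ) * (r:ℂ)^(i+1) * ((1:ℂ)-r)^(N-(i+1)) * y (i+1)) := by
    intro i hi
    rcases eq_or_lt_of_le (Nat.lt_succ_iff.mp (Finset.mem_range.mp hi)) with h | h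
    · subst h
      simp only [Nat.choose_succ_self, Nat.cast_zero, Nat.sub_self, pow_zero, zero_mul,
        mul_zero, add_zero, mul_one, Nat.choose_self, Nat.cast_one, one_mul]
      ring
    · have hs : N - i = (N - (i+1)) + 1 := by omega
      rw [hs, pow_succ]
      ring
  rw [Finset.sum_congr rfl hcongr, Finset.sum_add_distrib,
      Finset.sum_range_succ
        (fun i => ((1:ℂ)-r) * ((N.choose (i+1) : ℂ) * (r:ℂ)^(i+1) * ((1:ℂ)-r)^(N-(i+1)) * y (i+1))) N]
  simp only [Nat.choose_succ_self, Nat.cast_zero, zero_mul, mul_zero, add_zero]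
  rw [← Finset.mul_sum, ← Finset.mul_sum]
  ring

theorem stmt_6 (r : ℝ) (hr : r ∈ Set.Ioo (0:ℝ) 1) (x : ℕ → ℂ) :
    (⨆ N : ℕ, (‖binAvg r N (shiftOp x)‖₊ : ℝ≥0∞)) ≤ ⨆ N : ℕ, (‖binAvg r N x‖₊ : ℝ≥0∞) := by
  obtain ⟨hr0, hr1⟩ := hr
  apply iSup_le
  intro N
  induction N with
  | zero =>
      simp [binAvg, shiftOp]
  | succ N ih =>
      have hshift : (fun n => shiftOp x (n+1)) = x := by
        funext n; simp [shiftOp]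
      rw [binAvg_succ, hshift]
      have hb : (‖binAvg r N x‖₊ : ℝ≥0∞) ≤ ⨆ M : ℕ, (‖binAvg r M x‖₊ : ℝ≥0∞) :=
        le_iSup (fun M => (‖binAvg r M x‖₊ : ℝ≥0∞)) N
      calc (‖((1:ℂ)-r) * binAvg r N (shiftOp x) + (r:ℂ) * binAvg r N x‖₊ : ℝ≥0∞)
          ≤ (‖((1:ℂ)-r) * binAvg r N (shiftOp x)‖₊ : ℝ≥0∞)
            + (‖(r:ℂ) * binAvg r N x‖₊ : ℝ≥0∞) := by
            exact_mod_cast nnnorm_add_le _ _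
        _ = ((1-r).toNNReal : ℝ≥0∞) * ‖binAvg r N (shiftOp x)‖₊
            + (r.toNNReal : ℝ≥0∞) * ‖binAvg r N x‖₊ := by
            rw [nnnorm_mul, nnnorm_mul]
            push_cast
            congr 2
            · rw [show ((1:ℂ)-r) = ((1-r : ℝ) : ℂ) by push_cast; ring]
              rw [Complex.nnnorm_real, Real.nnnorm_of_nonneg (by linarith : (0:ℝ) ≤ 1-r),
                ← Real.toNNReal_of_nonneg (by linarith : (0:ℝ) ≤ 1-r)]
            · rw [Complex.nnnorm_real, Real.nnnorm_of_nonneg hr0.le,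
                ← Real.toNNReal_of_nonneg hr0.le]
        _ ≤ ((1-r).toNNReal : ℝ≥0∞) * (⨆ M : ℕ, (‖binAvg r M x‖₊ : ℝ≥0∞))
            + (r.toNNReal : ℝ≥0∞) * (⨆ M : ℕ, (‖binAvg r M x‖₊ : ℝ≥0∞)) := by
            gcongr
        _ = ⨆ M : ℕ, (‖binAvg r M x‖₊ : ℝ≥0∞) := by
            rw [← add_mul, ← ENNReal.coe_add,
              show (1-r).toNNReal + r.toNNReal = 1 by
                rw [← Real.toNNReal_add (by linarith) hr0.le]; norm_num,
              ENNReal.coe_one, one_mul]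
end

section
/- There exists a counterexample to the following claim: if ∑|λ_n| < ∞, r ∈ (0,1), and lim_{N→∞} E_{n≤N}^{Bin(r)}(x_n) = L, then lim_{N→∞} E_{n≤N}^{Bin(r)}(∑_{k=0}^n λ_k x_{n-k}) = L·(λ_0 + ∑_{n=1}^∞ λ_n r^{n-1}). Concretely, with r = 1/2, x_n = 1 for all n, and λ = (1/3, 1/3, 1/3, 0, 0, ...), the left-hand side equals 1 while the right-hand side equals 5/6. -/
open Finset Filter

lemma conv_val (n : ℕ) :
    (∑ k ∈ Finset.range (n + 1), (if k ≤ 2 then (1/3 : ℂ) else 0))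
      = 1 - ((if n = 0 then (2/3 : ℂ) else 0) + (if n = 1 then (1/3 : ℂ) else 0)) := by
  match n with
  | 0 => norm_num
  | 1 => norm_num [Finset.sum_range_succ]
  | (m+2) =>
    induction m with
    | zero => norm_num [Finset.sum_range_succ]
    | succ m ih =>
      rw [Finset.sum_range_succ, ih]
      have h2 : m + 2 ≠ 1 := by omega
      have h3 : ¬ (m + 3 ≤ 2) := by omega
      have h4 : m + 1 + 2 ≠ 1 := by omega
      simp [h2, h3, h4]

lemma binAvg_val (N : ℕ) (hN : 1 ≤ N) :
    binAvg (1/2) N (fun n => ∑ k ∈ Finset.range (n + 1), (if k ≤ 2 then (1/3 : ℂ) else 0) * 1)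
      = 1 - (2/3) * (1/2 : ℂ)^N - (N : ℂ) * (1/3) * (1/2 : ℂ)^N := by
  unfold binAvg
  have hhalf : ((1/2 : ℝ) : ℂ) = 1/2 := by norm_num
  have h1 : ((1 : ℂ) - ((1/2 : ℝ) : ℂ)) = 1/2 := by norm_num
  simp only [mul_one]
  have h2 : ((1 : ℂ) - 1/2) = 1/2 := by norm_num
  simp only [conv_val, hhalf, h1, h2, mul_sub, mul_add, mul_one, Finset.sum_sub_distrib,
    Finset.sum_add_distrib, mul_ite, mul_zero]
  rw [Finset.sum_ite_eq' (Finset.range (N+1)) 0, Finset.sum_ite_eq' (Finset.range (N+1)) 1]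
  have h0 : (0 : ℕ) ∈ Finset.range (N+1) := by simp
  have h1' : (1 : ℕ) ∈ Finset.range (N+1) := by
    simp [Nat.lt_succ_iff]; omega
  rw [if_pos h0, if_pos h1']
  have binom : ∑ n ∈ Finset.range (N+1),
      (N.choose n : ℂ) * (1/2 : ℂ)^n * (1/2 : ℂ)^(N-n) = 1 := by
    have h := add_pow (1/2 : ℂ) (1/2) N
    norm_num at h
    calc ∑ n ∈ Finset.range (N+1), (N.choose n : ℂ) * (1/2 : ℂ)^n * (1/2 : ℂ)^(N-n)
        = ∑ n ∈ Finset.range (N+1), (1/2 : ℂ)^n * (1/2 : ℂ)^(N-n) * (N.choose n : ℂ) :=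
          Finset.sum_congr rfl fun n _ => by ring
      _ = 1 := h.symm
  rw [binom]
  have hc1 : (N.choose 1 : ℂ) = (N : ℂ) := by rw [Nat.choose_one_right]
  have hp : (1/2 : ℂ)^1 * (1/2 : ℂ)^(N-1) = (1/2 : ℂ)^N := by
    rw [← pow_add]; congr 1; omega
  rw [Nat.choose_zero_right, hc1]
  push_cast
  rw [mul_assoc ((N:ℂ)), hp]
  simp only [Nat.sub_zero]
  ring

theorem stmt_9 :
    let x : ℕ → ℂ := fun _ => 1
    let l : ℕ → ℂ := fun n => if n ≤ 2 then 1 / 3 else 0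
    Tendsto (fun N => binAvg (1 / 2) N (fun n => ∑ k ∈ Finset.range (n + 1), l k * x (n - k)))
        atTop (nhds 1) ∧
      (1 : ℂ) * (l 0 + ∑' n : ℕ, l (n + 1) * ((1 : ℂ) / 2) ^ n) = 5 / 6 ∧
      (1 : ℂ) ≠ 5 / 6 := by
  intro x l
  refine ⟨?_, ?_, by norm_num⟩
  · have hpow : Tendsto (fun N : ℕ => (1/2 : ℂ)^N) atTop (nhds 0) := by
      apply tendsto_pow_atTop_nhds_zero_of_norm_lt_one
      norm_num
    have hnpow : Tendsto (fun N : ℕ => (N : ℂ) * (1/2 : ℂ)^N) atTop (nhds 0) := by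
      have hr : Tendsto (fun N : ℕ => ((N : ℝ) * (1/2 : ℝ)^N)) atTop (nhds 0) :=
        tendsto_self_mul_const_pow_of_lt_one (by norm_num) (by norm_num)
      have h := (Complex.continuous_ofReal.tendsto 0).comp hr
      rw [Complex.ofReal_zero] at h
      refine h.congr fun N => ?_
      simp [Function.comp]
    have hmain : Tendsto (fun N : ℕ =>
        1 - (2/3) * (1/2 : ℂ)^N - (N : ℂ) * (1/3) * (1/2 : ℂ)^N) atTop (nhds 1) := by
      have : Tendsto (fun N : ℕ =>
          1 - (2/3) * (1/2 : ℂ)^N - (N : ℂ) * (1/3) * (1/2 : ℂ)^N) atTop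
          (nhds (1 - (2/3) * 0 - (1/3) * 0)) := by
        apply Tendsto.sub
        · exact tendsto_const_nhds.sub (hpow.const_mul _)
        · have := hnpow.const_mul (1/3 : ℂ)
          simpa [mul_comm, mul_assoc, mul_left_comm] using this
      simpa using this
    refine hmain.congr' ?_
    filter_upwards [eventually_ge_atTop 1] with N hN
    exact (binAvg_val N hN).symm
  · have hts : (∑' n : ℕ, l (n + 1) * ((1 : ℂ) / 2) ^ n) = 1/2 := by
      have : (∑' n : ℕ, l (n + 1) * ((1 : ℂ) / 2) ^ n)
          = ∑ n ∈ ({0, 1} : Finset ℕ), l (n + 1) * ((1 : ℂ) / 2) ^ n := by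
        apply tsum_eq_sum
        intro n hn
        simp only [Finset.mem_insert, Finset.mem_singleton] at hn
        push_neg at hn
        have : ¬ (n + 1 ≤ 2) := by omega
        simp [l, this]
      rw [this]
      norm_num [l]
    rw [hts]
    norm_num [l]
end

section
/- Let W : ℕ → ℝ be increasing to ∞ with W(N) > 0, suppose L = lim_{N→∞} W(N-1)/W(N) exists with L ∈ (0,1), and set λ_n = L^n - L^{n+1} for n ≥ 0. Then for any bounded complex sequence (x_n), the difference (1/W(N)) ∑_{n=1}^N (W(n) - W(n-1)) x_n − ∑_{k=0}^N λ_k x_{N-k} tends to 0 as N → ∞. -/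
open Finset Filter

private noncomputable def aaW (W : ℕ → ℝ) (N k : ℕ) : ℝ :=
  (W (N - k) - W (N - k - 1)) / W N

private noncomputable def lamL (L : ℝ) (k : ℕ) : ℝ := L ^ k - L ^ (k + 1)

private lemma ratio_lim (W : ℕ → ℝ) (hWpos : ∀ n, 0 < W n) (L : ℝ)
    (hlim : Tendsto (fun N => W (N - 1) / W N) atTop (nhds L)) (j : ℕ) :
    Tendsto (fun N => W (N - j) / W N) atTop (nhds (L ^ j)) := by
  induction j with
  | zero =>
      simp only [Nat.sub_zero, pow_zero]
      have : (fun N => W N / W N) = fun _ : ℕ => (1 : ℝ) := by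
        funext N; exact div_self (hWpos N).ne'
      rw [this]; exact tendsto_const_nhds
  | succ j ih =>
      have h1 : Tendsto (fun N => W ((N - j) - 1) / W (N - j)) atTop (nhds L) :=
        hlim.comp (tendsto_sub_atTop_nat j)
      have h2 := h1.mul ih
      have heq : (fun N => W ((N - j) - 1) / W (N - j) * (W (N - j) / W N)) =
          fun N => W (N - (j + 1)) / W N := by
        funext N
        rw [div_mul_div_comm, mul_comm (W (N - j)) (W N),
          mul_div_mul_right _ _ (hWpos (N - j)).ne', Nat.sub_sub]
      rw [heq] at h2
      rw [pow_succ]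
      convert h2 using 2
      ring

private lemma aa_lim (W : ℕ → ℝ) (hWpos : ∀ n, 0 < W n) (L : ℝ)
    (hlim : Tendsto (fun N => W (N - 1) / W N) atTop (nhds L)) (k : ℕ) :
    Tendsto (fun N => aaW W N k) atTop (nhds (lamL L k)) := by
  have h := (ratio_lim W hWpos L hlim k).sub (ratio_lim W hWpos L hlim (k + 1))
  have heq : (fun N => W (N - k) / W N - W (N - (k + 1)) / W N) = fun N => aaW W N k := by
    funext N
    rw [aaW, sub_div, Nat.sub_sub]
  rwa [heq] at h

private lemma aa_nonneg (W : ℕ → ℝ) (hW : StrictMono W) (hWpos : ∀ n, 0 < W n)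
    (N k : ℕ) : 0 ≤ aaW W N k :=
  div_nonneg (sub_nonneg.2 (hW.monotone (Nat.sub_le _ _))) (hWpos N).le

private lemma lam_nonneg (L : ℝ) (hL : L ∈ Set.Ioo (0:ℝ) 1) (k : ℕ) : 0 ≤ lamL L k := by
  have : L ^ (k + 1) ≤ L ^ k :=
    pow_le_pow_of_le_one hL.1.le hL.2.le (Nat.le_succ k)
  simpa [lamL] using sub_nonneg.2 this

private lemma lam_sum (L : ℝ) (N : ℕ) :
    ∑ k ∈ Finset.range (N + 1), lamL L k = 1 - L ^ (N + 1) := by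
  have := Finset.sum_range_sub' (fun k => L ^ k) (N + 1)
  simpa [lamL] using this

private lemma aa_sum (W : ℕ → ℝ) (hWpos : ∀ n, 0 < W n) (N : ℕ) :
    ∑ k ∈ Finset.range (N + 1), aaW W N k = 1 - W 0 / W N := by
  have h1 : ∑ k ∈ Finset.range (N + 1), (W (N - k) - W (N - k - 1)) =
      ∑ n ∈ Finset.range (N + 1), (W n - W (n - 1)) := by
    have := Finset.sum_range_reflect (fun n => W n - W (n - 1)) (N + 1)
    simpa using this
  have h2 : ∑ n ∈ Finset.range (N + 1), (W n - W (n - 1)) = W N - W 0 := by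
    rw [Finset.sum_range_succ' (fun n => W n - W (n - 1)) N]
    simp only [Nat.add_sub_cancel, Nat.zero_sub, sub_self, add_zero]
    exact Finset.sum_range_sub W N
  have : ∑ k ∈ Finset.range (N + 1), aaW W N k =
      (∑ k ∈ Finset.range (N + 1), (W (N - k) - W (N - k - 1))) / W N := by
    rw [Finset.sum_div]; rfl
  rw [this, h1, h2, sub_div, div_self (hWpos N).ne']

private lemma min_sum_lim (W : ℕ → ℝ) (hW : StrictMono W) (hWpos : ∀ n, 0 < W n)
    (L : ℝ) (hL : L ∈ Set.Ioo (0:ℝ) 1)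
    (hlim : Tendsto (fun N => W (N - 1) / W N) atTop (nhds L)) :
    Tendsto (fun N => ∑ k ∈ Finset.range (N + 1), min (aaW W N k) (lamL L k))
      atTop (nhds 1) := by
  rw [Metric.tendsto_atTop]
  intro ε hε
  obtain ⟨K, hK⟩ := (Metric.tendsto_atTop.1
    (tendsto_pow_atTop_nhds_zero_of_lt_one hL.1.le hL.2)) (ε / 2) (by linarith)
  have hLK : L ^ K < ε / 2 := by
    have := hK K le_rfl
    rw [Real.dist_eq, sub_zero, abs_of_pos (pow_pos hL.1 K)] at this
    exact this
  have hhead : Tendsto (fun N => ∑ k ∈ Finset.range K, min (aaW W N k) (lamL L k))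
      atTop (nhds (∑ k ∈ Finset.range K, lamL L k)) := by
    refine tendsto_finset_sum _ (fun k _ => ?_)
    have := (aa_lim W hWpos L hlim k).min (tendsto_const_nhds (x := lamL L k))
    simpa using this
  obtain ⟨N₀, hN₀⟩ := Metric.tendsto_atTop.1 hhead (ε / 2) (by linarith)
  refine ⟨max N₀ K, fun N hN => ?_⟩
  have hN₀' := hN₀ N (le_trans (le_max_left _ _) hN)
  have hKN : K ≤ N := le_trans (le_max_right _ _) hN
  set M := ∑ k ∈ Finset.range (N + 1), min (aaW W N k) (lamL L k) with hM
  have hub : M ≤ 1 := by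
    have h1 : M ≤ ∑ k ∈ Finset.range (N + 1), lamL L k :=
      Finset.sum_le_sum (fun k _ => min_le_right _ _)
    rw [lam_sum] at h1
    have : 0 < L ^ (N + 1) := pow_pos hL.1 _
    linarith
  have hlb : 1 - ε < M := by
    have hsub : Finset.range K ⊆ Finset.range (N + 1) :=
      Finset.range_subset_range.2 (by omega)
    have h1 : ∑ k ∈ Finset.range K, min (aaW W N k) (lamL L k) ≤ M :=
      Finset.sum_le_sum_of_subset_of_nonneg hsub (fun k _ _ =>
        le_min (aa_nonneg W hW hWpos N k) (lam_nonneg L hL k))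
    have h2 : |∑ k ∈ Finset.range K, min (aaW W N k) (lamL L k) -
        ∑ k ∈ Finset.range K, lamL L k| < ε / 2 := by
      have := hN₀'
      rwa [Real.dist_eq] at this
    have h3 : ∑ k ∈ Finset.range K, lamL L k = 1 - L ^ K := by
      have := Finset.sum_range_sub' (fun k => L ^ k) K
      simpa [lamL] using this
    have h4 := abs_sub_lt_iff.1 h2
    linarith [h4.2]
  rw [Real.dist_eq]
  rw [abs_of_nonpos (by linarith)]
  linarith

private lemma S_lim (W : ℕ → ℝ) (hW : StrictMono W) (hWtop : Tendsto W atTop atTop)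
    (hWpos : ∀ n, 0 < W n) (L : ℝ) (hL : L ∈ Set.Ioo (0:ℝ) 1)
    (hlim : Tendsto (fun N => W (N - 1) / W N) atTop (nhds L)) :
    Tendsto (fun N => ∑ k ∈ Finset.range (N + 1), |aaW W N k - lamL L k|)
      atTop (nhds 0) := by
  have habs : ∀ a b : ℝ, |a - b| = a + b - 2 * min a b := by
    intro a b
    have h1 := max_add_min a b
    have h2 := max_sub_min_eq_abs a b
    have : |b - a| = |a - b| := abs_sub_comm b a
    rw [this] at h2
    linarith
  have heq : (fun N => ∑ k ∈ Finset.range (N + 1), |aaW W N k - lamL L k|) =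
      fun N => (1 - W 0 / W N) + (1 - L ^ (N + 1)) -
        2 * ∑ k ∈ Finset.range (N + 1), min (aaW W N k) (lamL L k) := by
    funext N
    rw [← aa_sum W hWpos N, ← lam_sum L N, Finset.mul_sum,
      ← Finset.sum_add_distrib, ← Finset.sum_sub_distrib]
    exact Finset.sum_congr rfl (fun k _ => habs _ _)
  rw [heq]
  have hW0 : Tendsto (fun N => W 0 / W N) atTop (nhds 0) :=
    tendsto_const_nhds.div_atTop hWtop
  have hLp : Tendsto (fun N : ℕ => L ^ (N + 1)) atTop (nhds 0) :=
    (tendsto_pow_atTop_nhds_zero_of_lt_one hL.1.le hL.2).comp (tendsto_add_atTop_nat 1)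
  have hmin := min_sum_lim W hW hWpos L hL hlim
  have h1 : Tendsto (fun _ : ℕ => (1:ℝ)) atTop (nhds 1) := tendsto_const_nhds
  have h2 : Tendsto (fun _ : ℕ => (2:ℝ)) atTop (nhds 2) := tendsto_const_nhds
  have := ((h1.sub hW0).add (h1.sub hLp)).sub (h2.mul hmin)
  norm_num at this
  exact this

theorem stmt_12 (W : ℕ → ℝ) (hW : StrictMono W) (hWtop : Tendsto W atTop atTop)
    (hWpos : ∀ n, 0 < W n) (L : ℝ) (hL : L ∈ Set.Ioo (0:ℝ) 1)
    (hlim : Tendsto (fun N => W (N - 1) / W N) atTop (nhds L))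
    (x : ℕ → ℂ) (hx : ∃ C, ∀ n, ‖x n‖ ≤ C) :
    Tendsto (fun N =>
        (1 / (W N : ℂ)) * ∑ n ∈ Finset.Icc 1 N, ((W n - W (n - 1) : ℝ) : ℂ) * x n
          - ∑ k ∈ Finset.range (N + 1), ((L ^ k - L ^ (k + 1) : ℝ) : ℂ) * x (N - k))
      atTop (nhds 0) := by
  obtain ⟨C, hC⟩ := hx
  have hC0 : 0 ≤ C := le_trans (norm_nonneg _) (hC 0)
  -- rewrite the expression
  have key : ∀ N, (1 / (W N : ℂ)) * ∑ n ∈ Finset.Icc 1 N, ((W n - W (n - 1) : ℝ) : ℂ) * x n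
          - ∑ k ∈ Finset.range (N + 1), ((L ^ k - L ^ (k + 1) : ℝ) : ℂ) * x (N - k)
      = ∑ k ∈ Finset.range (N + 1), ((aaW W N k - lamL L k : ℝ) : ℂ) * x (N - k) := by
    intro N
    have h0 : (1 / (W N : ℂ)) * ∑ n ∈ Finset.Icc 1 N, ((W n - W (n - 1) : ℝ) : ℂ) * x n
        = ∑ n ∈ Finset.Icc 1 N, (((W n - W (n - 1)) / W N : ℝ) : ℂ) * x n := by
      rw [Finset.mul_sum]
      refine Finset.sum_congr rfl (fun n _ => ?_)
      push_cast
      field_simp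
    have h1 : Finset.range (N + 1) = insert 0 (Finset.Icc 1 N) := by
      ext m; simp [Finset.mem_range, Finset.mem_Icc]; omega
    have h2 : ∑ n ∈ Finset.Icc 1 N, (((W n - W (n - 1)) / W N : ℝ) : ℂ) * x n
        = ∑ n ∈ Finset.range (N + 1), (((W n - W (n - 1)) / W N : ℝ) : ℂ) * x n := by
      rw [h1, Finset.sum_insert (by simp)]
      simp
    have h3 : ∑ n ∈ Finset.range (N + 1), (((W n - W (n - 1)) / W N : ℝ) : ℂ) * x n
        = ∑ k ∈ Finset.range (N + 1), ((aaW W N k : ℝ) : ℂ) * x (N - k) := by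
      have := Finset.sum_range_reflect
        (fun n => (((W n - W (n - 1)) / W N : ℝ) : ℂ) * x n) (N + 1)
      rw [← this]
      refine Finset.sum_congr rfl (fun k hk => ?_)
      simp only [Nat.add_sub_cancel]
      rfl
    rw [h0, h2, h3, ← Finset.sum_sub_distrib]
    refine Finset.sum_congr rfl (fun k _ => ?_)
    rw [lamL]
    push_cast
    ring
  have hbound : ∀ N, ‖(1 / (W N : ℂ)) * ∑ n ∈ Finset.Icc 1 N, ((W n - W (n - 1) : ℝ) : ℂ) * x n
          - ∑ k ∈ Finset.range (N + 1), ((L ^ k - L ^ (k + 1) : ℝ) : ℂ) * x (N - k)‖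
        ≤ (∑ k ∈ Finset.range (N + 1), |aaW W N k - lamL L k|) * C := by
    intro N
    rw [key N]
    calc ‖∑ k ∈ Finset.range (N + 1), ((aaW W N k - lamL L k : ℝ) : ℂ) * x (N - k)‖
        ≤ ∑ k ∈ Finset.range (N + 1), ‖((aaW W N k - lamL L k : ℝ) : ℂ) * x (N - k)‖ :=
          norm_sum_le _ _
      _ ≤ ∑ k ∈ Finset.range (N + 1), |aaW W N k - lamL L k| * C := by
          refine Finset.sum_le_sum (fun k _ => ?_)
          rw [norm_mul, Complex.norm_real]
          exact mul_le_mul_of_nonneg_left (hC _) (abs_nonneg _)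
      _ = (∑ k ∈ Finset.range (N + 1), |aaW W N k - lamL L k|) * C := by
          rw [Finset.sum_mul]
  refine squeeze_zero_norm hbound ?_
  have := (S_lim W hW hWtop hWpos L hL hlim).mul (tendsto_const_nhds (x := C))
  simpa using this
end

section
/- Let r ∈ (0,1) and let (x_n) be a complex sequence. If (E_{n≤N}^{Bin(r)}(x_n))_{N∈ℕ} is bounded, then the sequence of averages of the shifted sequence, (E_{n≤N}^{Bin(r)}((T^k x)_n))_{N∈ℕ}, is uniformly bounded in both N and k by sup_N |E_{n≤N}^{Bin(r)}(x_n)| together with the finitely many initial values; in particular there is a constant C with |E_{n≤N}^{Bin(r)}((T^k x)_n)| ≤ C for all N, k ∈ ℕ. -/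
open Finset Filter

/-
Pascal's rule splits the binomial weights of level `N + 1`, which makes the averages of `T x`
satisfy `E_{N+1}(T x) = r E_N(x) + (1 - r) E_N(T x)`. Each average of `T x` is therefore a convex
combination of averages of `x` (and of `E_0(T x) = 0`), so a bound `C ≥ 0` for `x` passes to
`T x`, and by induction to every `T^k x`.
-/

theorem binAvg_shiftOp (r : ℝ) (N : ℕ) (x : ℕ → ℂ) :
    binAvg r N (shiftOp x) =
      ∑ i ∈ range N, (N.choose (i + 1) : ℂ) * (r : ℂ) ^ (i + 1) * (1 - r) ^ (N - (i + 1)) * x i := by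
  simp [binAvg, sum_range_succ' _ N, shiftOp]

theorem binAvg_succ_shiftOp (r : ℝ) (N : ℕ) (x : ℕ → ℂ) :
    binAvg r (N + 1) (shiftOp x) = r * binAvg r N x + (1 - r) * binAvg r N (shiftOp x) := by
  have pascal : binAvg r (N + 1) (shiftOp x) =
      (r : ℂ) * binAvg r N x + ∑ i ∈ range (N + 1),
        (N.choose (i + 1) : ℂ) * (r : ℂ) ^ (i + 1) * (1 - r) ^ (N - i) * x i := by
    rw [binAvg_shiftOp, binAvg, mul_sum, ← sum_add_distrib]
    refine sum_congr rfl fun i _ => ?_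
    rw [Nat.choose_succ_succ, Nat.succ_sub_succ]
    push_cast
    ring
  rw [pascal, binAvg_shiftOp, sum_range_succ, Nat.choose_succ_self, mul_sum]
  simp only [Nat.cast_zero, zero_mul, add_zero]
  congr 1
  refine sum_congr rfl fun i hi => ?_
  rw [show N - i = N - (i + 1) + 1 by have := mem_range.mp hi; omega, pow_succ]
  ring

theorem norm_binAvg_shiftOp_le {r C : ℝ} (hr : r ∈ Set.Icc (0 : ℝ) 1) (hC : 0 ≤ C)
    {x : ℕ → ℂ} (hx : ∀ N, ‖binAvg r N x‖ ≤ C) (N : ℕ) :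
    ‖binAvg r N (shiftOp x)‖ ≤ C := by
  induction N with
  | zero => simpa [binAvg, shiftOp] using hC
  | succ N ih =>
    have norm_r : ‖(r : ℂ)‖ = r := by simp [abs_of_nonneg hr.1]
    have norm_one_sub_r : ‖(1 : ℂ) - r‖ = 1 - r := by
      rw [← Complex.ofReal_one, ← Complex.ofReal_sub, Complex.norm_real, Real.norm_eq_abs,
        abs_of_nonneg (sub_nonneg.mpr hr.2)]
    calc ‖binAvg r (N + 1) (shiftOp x)‖
        ≤ ‖(r : ℂ)‖ * ‖binAvg r N x‖ + ‖(1 : ℂ) - r‖ * ‖binAvg r N (shiftOp x)‖ := by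
          rw [binAvg_succ_shiftOp, ← norm_mul, ← norm_mul]
          exact norm_add_le _ _
      _ ≤ r * C + (1 - r) * C := by
          rw [norm_r, norm_one_sub_r]
          have h1r : 0 ≤ 1 - r := sub_nonneg.mpr hr.2
          gcongr
          · exact hr.1
          · exact hx N
      _ = C := by ring

theorem norm_binAvg_iterate_shiftOp_le {r C : ℝ} (hr : r ∈ Set.Icc (0 : ℝ) 1) (hC : 0 ≤ C)
    {x : ℕ → ℂ} (hx : ∀ N, ‖binAvg r N x‖ ≤ C) (k N : ℕ) :
    ‖binAvg r N (shiftOp^[k] x)‖ ≤ C := by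
  induction k generalizing N with
  | zero => exact hx N
  | succ k ih =>
    rw [Function.iterate_succ_apply']
    exact norm_binAvg_shiftOp_le hr hC ih N

theorem stmt_17 (r : ℝ) (hr : r ∈ Set.Ioo (0:ℝ) 1) (x : ℕ → ℂ)
    (h : ∃ C₀, ∀ N, ‖binAvg r N x‖ ≤ C₀) :
    ∃ C, ∀ N k : ℕ, ‖binAvg r N (shiftOp^[k] x)‖ ≤ C := by
  obtain ⟨C₀, hC₀⟩ := h
  exact ⟨max C₀ 0, fun N k => norm_binAvg_iterate_shiftOp_le (Set.Ioo_subset_Icc_self hr)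
    (le_max_right _ _) (fun N => (hC₀ N).trans (le_max_left _ _)) k N⟩
end
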